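/- arXiv:1703.09565 — 5 statements merged into one kernel-verified Lean document; each statement's English description precedes it below -/
import Mathlib

section
/- Let f, g : ℝ^n × ℝ^n → ℝ^n (resp. ℝ^{n×m}) satisfy the generalized Khasminskii condition: there exist K₁ > 0, K₂ ≥ 0 and β > 2 such that xᵀf(x,y) + ½|g(x,y)|² ≤ K₁(1+|x|²+|y|²) − K₂|x|^β + K₂|y|^β for all x,y. Let R ≥ 1 and define π(x) = (|x| ∧ R)·x/|x| (with π(0)=0), f_R(x,y) = f(π(x),π(y)), g_R(x,y) = g(π(x),π(y)). Then for all x,y ∈ ℝ^n: xᵀf_R(x,y) + ½|g_R(x,y)|² ≤ 2K₁(1+|x|²+|y|²) − K₂|π(x)|^β + K₂|π(y)|^β. -/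
/-!
Inside the ball of radius `R` the truncation is the identity and the claim is the Khasminskii
condition at `(x, π y)`, weakened using `|π y| ≤ |y|`. Outside it, `x = t • π x` with
`t = |x| / R ≥ 1`, so the left-hand side is at most `t` times the Khasminskii bound at
`(π x, π y)`. There `|π x| = R ≥ |π y|`, so the `K₂` part is nonpositive and the factor `t` may
be dropped from it, while `t (1 + R² + |π y|²) ≤ |x| + |x|² + |x| |y| ≤ 2 (1 + |x|² + |y|²)`.
-/

open RealInnerProductSpace

section Truncation

variable {E : Type*} [NormedAddCommGroup E] [NormedSpace ℝ E]

/-- The junk value `0 / 0 = 0` gives `truncate R 0 = 0`. -/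
noncomputable def truncate (R : ℝ) (x : E) : E := (min ‖x‖ R / ‖x‖) • x

lemma norm_truncate {R : ℝ} (hR : 0 ≤ R) (x : E) : ‖truncate R x‖ = min ‖x‖ R := by
  rcases eq_or_ne x 0 with rfl | hx
  · simp [truncate, hR]
  · have hx : 0 < ‖x‖ := norm_pos_iff.2 hx
    rw [truncate, norm_smul, Real.norm_of_nonneg (by positivity), div_mul_cancel₀ _ hx.ne']

lemma truncate_of_norm_le {R : ℝ} {x : E} (hx : ‖x‖ ≤ R) : truncate R x = x := by
  rcases eq_or_ne x 0 with rfl | hx0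
  · simp [truncate]
  · rw [truncate, min_eq_left hx, div_self (norm_ne_zero_iff.2 hx0), one_smul]

lemma smul_truncate_of_lt_norm {R : ℝ} (hR : 0 < R) {x : E} (hx : R < ‖x‖) :
    (‖x‖ / R) • truncate R x = x := by
  have hscale : ‖x‖ / R * (R / ‖x‖) = 1 := by
    field_simp [(hR.trans hx).ne']
  rw [truncate, min_eq_right hx.le, smul_smul, hscale, one_smul]

end Truncation

section Khasminskii

variable {E F : Type*} [NormedAddCommGroup E] [InnerProductSpace ℝ E] [NormedAddCommGroup F]

def SatisfiesKhasminskii (f : E → E → E) (g : E → E → F) (K₁ K₂ β : ℝ) : Prop :=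
  ∀ x y : E, ⟪x, f x y⟫ + 1 / 2 * ‖g x y‖ ^ 2
    ≤ K₁ * (1 + ‖x‖ ^ 2 + ‖y‖ ^ 2) - K₂ * ‖x‖ ^ β + K₂ * ‖y‖ ^ β

lemma scaled_quadratic_le {R a b q : ℝ} (hR : 1 ≤ R) (ha : R ≤ a) (hq : 0 ≤ q)
    (hqb : q ≤ b) (hqR : q ≤ R) :
    a / R * (1 + R ^ 2 + q ^ 2) ≤ 2 * (1 + a ^ 2 + b ^ 2) := by
  have hR0 : 0 < R := one_pos.trans_le hR
  have ha0 : 0 ≤ a := hR0.le.trans ha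
  have h₁ : a / R ≤ a := div_le_self ha0 hR
  have h₂ : a / R * R ^ 2 ≤ a ^ 2 := by
    have : a / R * R ^ 2 = a * R := by field_simp
    nlinarith
  have h₃ : a / R * q ^ 2 ≤ a * b := by
    rw [div_mul_eq_mul_div, div_le_iff₀ hR0]
    have : q ^ 2 ≤ b * R := by nlinarith
    nlinarith
  nlinarith [sq_nonneg (a - 1), sq_nonneg (a - b)]

lemma rescaled_bound_le {t I G A B C D K₁ K₂ : ℝ} (ht : 1 ≤ t) (hG : 0 ≤ G) (hK₁ : 0 ≤ K₁)
    (hK₂ : 0 ≤ K₂) (hDC : D ≤ C) (hA : t * A ≤ 2 * B)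
    (h : I + 1 / 2 * G ≤ K₁ * A - K₂ * C + K₂ * D) :
    t * I + 1 / 2 * G ≤ 2 * K₁ * B - K₂ * C + K₂ * D := by
  have hscaled : t * I + 1 / 2 * G ≤ t * (I + 1 / 2 * G) := by nlinarith
  have hbound : t * (I + 1 / 2 * G) ≤ t * (K₁ * A) + t * (K₂ * (D - C)) := by nlinarith
  have hdrop : t * (K₂ * (D - C)) ≤ K₂ * (D - C) := by
    nlinarith [mul_nonpos_of_nonneg_of_nonpos hK₂ (sub_nonpos.2 hDC)]
  nlinarith [mul_le_mul_of_nonneg_left hA hK₁]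

variable {f : E → E → E} {g : E → E → F} {K₁ K₂ β R : ℝ}

lemma SatisfiesKhasminskii.truncate_of_norm_le (hf : SatisfiesKhasminskii f g K₁ K₂ β)
    (hK₁ : 0 ≤ K₁) (hR : 0 ≤ R) {x : E} (hx : ‖x‖ ≤ R) (y : E) :
    ⟪x, f (truncate R x) (truncate R y)⟫ + 1 / 2 * ‖g (truncate R x) (truncate R y)‖ ^ 2
      ≤ 2 * K₁ * (1 + ‖x‖ ^ 2 + ‖y‖ ^ 2) - K₂ * ‖truncate R x‖ ^ β
        + K₂ * ‖truncate R y‖ ^ β := by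
  have hy : ‖truncate R y‖ ≤ ‖y‖ := (norm_truncate hR y).trans_le (min_le_left _ _)
  have hy2 : ‖truncate R y‖ ^ 2 ≤ ‖y‖ ^ 2 := pow_le_pow_left₀ (norm_nonneg _) hy 2
  have := hf x (truncate R y)
  rw [_root_.truncate_of_norm_le hx]
  nlinarith [mul_le_mul_of_nonneg_left hy2 hK₁,
    mul_nonneg hK₁ (by positivity : (0 : ℝ) ≤ 1 + ‖x‖ ^ 2 + ‖y‖ ^ 2)]

lemma SatisfiesKhasminskii.truncate_of_lt_norm (hf : SatisfiesKhasminskii f g K₁ K₂ β)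
    (hK₁ : 0 ≤ K₁) (hK₂ : 0 ≤ K₂) (hβ : 0 ≤ β) (hR : 1 ≤ R) {x : E} (hx : R < ‖x‖) (y : E) :
    ⟪x, f (truncate R x) (truncate R y)⟫ + 1 / 2 * ‖g (truncate R x) (truncate R y)‖ ^ 2
      ≤ 2 * K₁ * (1 + ‖x‖ ^ 2 + ‖y‖ ^ 2) - K₂ * ‖truncate R x‖ ^ β
        + K₂ * ‖truncate R y‖ ^ β := by
  have hR0 : 0 < R := one_pos.trans_le hR
  have hxR : ‖truncate R x‖ = R := by rw [norm_truncate hR0.le, min_eq_right hx.le]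
  have hyR : ‖truncate R y‖ = min ‖y‖ R := norm_truncate hR0.le y
  have hinner : ⟪x, f (truncate R x) (truncate R y)⟫
      = ‖x‖ / R * ⟪truncate R x, f (truncate R x) (truncate R y)⟫ := by
    rw [← real_inner_smul_left, smul_truncate_of_lt_norm hR0 hx]
  have hDC : ‖truncate R y‖ ^ β ≤ R ^ β :=
    Real.rpow_le_rpow (norm_nonneg _) (hyR ▸ min_le_right _ _) hβ
  have hA := scaled_quadratic_le hR hx.le (norm_nonneg (truncate R y))
    (hyR ▸ min_le_left _ _) (hyR ▸ min_le_right _ _)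
  have h := hf (truncate R x) (truncate R y)
  rw [hxR] at h ⊢
  rw [hinner]
  exact rescaled_bound_le ((one_le_div hR0).2 hx.le) (sq_nonneg _) hK₁ hK₂ hDC hA h

end Khasminskii

theorem stmt_0 {n m : ℕ}
    (f : EuclideanSpace ℝ (Fin n) → EuclideanSpace ℝ (Fin n) → EuclideanSpace ℝ (Fin n))
    (g : EuclideanSpace ℝ (Fin n) → EuclideanSpace ℝ (Fin n) → EuclideanSpace ℝ (Fin n × Fin m))
    (K₁ K₂ β : ℝ) (hK₁ : 0 < K₁) (hK₂ : 0 ≤ K₂) (hβ : 2 < β)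
    (hKhas : ∀ x y : EuclideanSpace ℝ (Fin n),
      (inner ℝ (x) (f x y) : ℝ) + (1/2) * ‖g x y‖ ^ 2
        ≤ K₁ * (1 + ‖x‖ ^ 2 + ‖y‖ ^ 2) - K₂ * ‖x‖ ^ β + K₂ * ‖y‖ ^ β)
    (R : ℝ) (hR : 1 ≤ R)
    (π : EuclideanSpace ℝ (Fin n) → EuclideanSpace ℝ (Fin n))
    (hπ : ∀ x, π x = (min ‖x‖ R / ‖x‖) • x) :
    ∀ x y : EuclideanSpace ℝ (Fin n),
      (inner ℝ (x) (f (π x) (π y)) : ℝ) + (1/2) * ‖g (π x) (π y)‖ ^ 2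
        ≤ 2 * K₁ * (1 + ‖x‖ ^ 2 + ‖y‖ ^ 2) - K₂ * ‖π x‖ ^ β + K₂ * ‖π y‖ ^ β := by
  obtain rfl : π = truncate R := funext hπ
  have hf : SatisfiesKhasminskii f g K₁ K₂ β := hKhas
  intro x y
  rcases le_or_gt ‖x‖ R with hx | hx
  · exact hf.truncate_of_norm_le hK₁.le (zero_le_one.trans hR) hx y
  · exact hf.truncate_of_lt_norm hK₁.le hK₂ (by linarith) hR hx y
end

section
/- Suppose there exist constants p̄ > 2 and K₁ > 0 such that xᵀf(x,y) + ((p̄−1)/2)|g(x,y)|² ≤ K₁(1+|x|²+|y|²) for all x,y ∈ ℝ^n. Let R ≥ 1 and π(x) = (|x| ∧ R)·x/|x| (π(0)=0), and set f_R(x,y) = f(π(x),π(y)), g_R(x,y) = g(π(x),π(y)). Then xᵀf_R(x,y) + ((p̄−1)/2)|g_R(x,y)|² ≤ 2K₁(1+|x|²+|y|²) for all x,y ∈ ℝ^n. -/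
theorem stmt_2 {n m : ℕ}
    (f : EuclideanSpace ℝ (Fin n) → EuclideanSpace ℝ (Fin n) → EuclideanSpace ℝ (Fin n))
    (g : EuclideanSpace ℝ (Fin n) → EuclideanSpace ℝ (Fin n) → EuclideanSpace ℝ (Fin n × Fin m))
    (pbar K₁ : ℝ) (hp : 2 < pbar) (hK₁ : 0 < K₁)
    (hKhas : ∀ x y : EuclideanSpace ℝ (Fin n),
      (inner ℝ (x) (f x y) : ℝ) + ((pbar - 1)/2) * ‖g x y‖ ^ 2 ≤ K₁ * (1 + ‖x‖ ^ 2 + ‖y‖ ^ 2))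
    (R : ℝ) (hR : 1 ≤ R)
    (π : EuclideanSpace ℝ (Fin n) → EuclideanSpace ℝ (Fin n))
    (hπ : ∀ x, π x = (min ‖x‖ R / ‖x‖) • x) :
    ∀ x y : EuclideanSpace ℝ (Fin n),
      (inner ℝ (x) (f (π x) (π y)) : ℝ) + ((pbar - 1)/2) * ‖g (π x) (π y)‖ ^ 2
        ≤ 2 * K₁ * (1 + ‖x‖ ^ 2 + ‖y‖ ^ 2) := by
  have hC0 : (0:ℝ) ≤ (pbar - 1)/2 := by linarith
  have hR0 : (0:ℝ) ≤ R := by linarith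
  have hnormπ : ∀ z : EuclideanSpace ℝ (Fin n), ‖π z‖ = min ‖z‖ R := by
    intro z
    by_cases hz : z = 0
    · simp [hπ, hz]
      linarith
    · rw [hπ, norm_smul]
      have hz0 : 0 < ‖z‖ := norm_pos_iff.mpr hz
      have h1 : 0 ≤ min ‖z‖ R := le_min (norm_nonneg z) hR0
      rw [Real.norm_eq_abs, abs_of_nonneg (div_nonneg h1 hz0.le)]
      field_simp
  intro x y
  have hmy : ‖π y‖ ≤ ‖y‖ := by rw [hnormπ]; exact min_le_left _ _
  have hmyR : ‖π y‖ ≤ R := by rw [hnormπ]; exact min_le_right _ _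
  have hmy0 : (0:ℝ) ≤ ‖π y‖ := norm_nonneg _
  by_cases hx : x = 0
  · subst hx
    have hπ0 : π 0 = 0 := by simp [hπ]
    have h := hKhas (π 0) (π y)
    rw [hπ0] at h ⊢
    simp only [inner_zero_left, norm_zero] at h ⊢
    nlinarith [pow_le_pow_left₀ hmy0 hmy 2, hK₁, sq_nonneg ‖y‖]
  · have hx0 : 0 < ‖x‖ := norm_pos_iff.mpr hx
    have hminx : 0 < min ‖x‖ R := lt_min hx0 (by linarith)
    set l : ℝ := ‖x‖ / min ‖x‖ R with hl
    have hl1 : 1 ≤ l := (one_le_div hminx).mpr (min_le_left _ _)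
    have hinner : (inner ℝ x (f (π x) (π y)) : ℝ)
        = l * inner ℝ (π x) (f (π x) (π y)) := by
      rw [hπ x, real_inner_smul_left, hl]
      field_simp
    have hK := hKhas (π x) (π y)
    have hG : (0:ℝ) ≤ ((pbar - 1)/2) * ‖g (π x) (π y)‖ ^ 2 :=
      mul_nonneg hC0 (sq_nonneg _)
    have step1 : (inner ℝ x (f (π x) (π y)) : ℝ) + ((pbar - 1)/2) * ‖g (π x) (π y)‖ ^ 2
        ≤ l * (K₁ * (1 + ‖π x‖ ^ 2 + ‖π y‖ ^ 2)) := by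
      rw [hinner]
      calc l * (inner ℝ (π x) (f (π x) (π y)) : ℝ) + ((pbar - 1)/2) * ‖g (π x) (π y)‖ ^ 2
          ≤ l * ((inner ℝ (π x) (f (π x) (π y)) : ℝ) + ((pbar - 1)/2) * ‖g (π x) (π y)‖ ^ 2) := by
            nlinarith
        _ ≤ l * (K₁ * (1 + ‖π x‖ ^ 2 + ‖π y‖ ^ 2)) :=
            mul_le_mul_of_nonneg_left hK (by linarith)
    refine step1.trans ?_
    have hfin : l * (1 + ‖π x‖ ^ 2 + ‖π y‖ ^ 2) ≤ 2 * (1 + ‖x‖ ^ 2 + ‖y‖ ^ 2) := by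
      rcases le_or_gt ‖x‖ R with h | h
      · have hleq : l = 1 := by rw [hl, min_eq_left h, div_self hx0.ne']
        rw [hleq, hnormπ x, min_eq_left h]
        nlinarith [pow_le_pow_left₀ hmy0 hmy 2, sq_nonneg ‖x‖, sq_nonneg ‖y‖]
      · have hlR : l = ‖x‖ / R := by rw [hl, min_eq_right h.le]
        rw [hlR, hnormπ x, min_eq_right h.le]
        rw [div_mul_eq_mul_div, div_le_iff₀ (by linarith)]
        nlinarith [mul_nonneg hR0 (sq_nonneg (‖x‖ - 1)),
          mul_nonneg hR0 (sq_nonneg (‖x‖ - ‖y‖)),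
          mul_nonneg (mul_nonneg hR0 hx0.le) (by linarith : (0:ℝ) ≤ ‖x‖ - R),
          mul_nonneg (mul_nonneg hx0.le hmy0) (by linarith : (0:ℝ) ≤ R - ‖π y‖),
          mul_nonneg (mul_nonneg hx0.le hR0) (by linarith : (0:ℝ) ≤ ‖y‖ - ‖π y‖),
          mul_nonneg (by linarith : (0:ℝ) ≤ R - 1) hx0.le]
    calc l * (K₁ * (1 + ‖π x‖ ^ 2 + ‖π y‖ ^ 2))
        = K₁ * (l * (1 + ‖π x‖ ^ 2 + ‖π y‖ ^ 2)) := by ring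
      _ ≤ K₁ * (2 * (1 + ‖x‖ ^ 2 + ‖y‖ ^ 2)) :=
          mul_le_mul_of_nonneg_left hfin hK₁.le
      _ = 2 * K₁ * (1 + ‖x‖ ^ 2 + ‖y‖ ^ 2) := by ring
end

section
/- Let a₁,…,a₅ be positive real numbers with a₃ > a₄² + a₅², and define f(x,y) = x(a₁ + a₂y − a₃x²) and g(x,y) = x(a₄x + a₅y) for x,y ∈ ℝ. Set δ = a₃ − a₄² − a₅² and K₁ = max(a₁, a₂²/(4δ)). Then for all x,y ∈ ℝ: x·f(x,y) + ½g(x,y)² ≤ K₁(1 + x² + y²) − ½a₅²x⁴ + ½a₅²y⁴. -/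
/-! Expand `½ g²` with `(u + v)² ≤ 2(u² + v²)` and `2x²y² ≤ x⁴ + y⁴`; what is left of `-a₃ x⁴`
is `-δ x⁴ - ½ a₅² x⁴`, and the spare `-δ x⁴` absorbs the cross term `a₂ x² y` by Young's
inequality, which is where `a₂² / (4δ)` comes from. -/

lemma mul_sub_mul_sq_le_sq_div {δ : ℝ} (hδ : 0 < δ) (b t y : ℝ) :
    b * t * y - δ * t ^ 2 ≤ b ^ 2 / (4 * δ) * y ^ 2 := by
  have hsq : 0 ≤ (2 * δ * t - b * y) ^ 2 := sq_nonneg _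
  rw [div_mul_eq_mul_div, le_div_iff₀ (by positivity)]
  nlinarith

lemma half_sq_mul_add_le (a b x y : ℝ) :
    (1 / 2) * (x * (a * x + b * y)) ^ 2
      ≤ a ^ 2 * x ^ 4 + (1 / 2) * b ^ 2 * x ^ 4 + (1 / 2) * b ^ 2 * y ^ 4 := by
  have hsplit := add_sq_le (a := a * x ^ 2) (b := b * x * y)
  have hcross := two_mul_le_add_sq (x ^ 2) (y ^ 2)
  have hb : 0 ≤ b ^ 2 := sq_nonneg b
  nlinarith

theorem stmt_3_general (a₁ a₂ a₃ a₄ a₅ : ℝ)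
    (hcond : a₄ ^ 2 + a₅ ^ 2 < a₃) :
    ∀ x y : ℝ,
      x * (x * (a₁ + a₂ * y - a₃ * x ^ 2)) + (1/2) * (x * (a₄ * x + a₅ * y)) ^ 2
        ≤ (max a₁ (a₂ ^ 2 / (4 * (a₃ - a₄ ^ 2 - a₅ ^ 2)))) * (1 + x ^ 2 + y ^ 2)
          - (1/2) * a₅ ^ 2 * x ^ 4 + (1/2) * a₅ ^ 2 * y ^ 4 := by
  intro x y
  set δ := a₃ - a₄ ^ 2 - a₅ ^ 2
  have hδ : 0 < δ := by linarith
  set c := a₂ ^ 2 / (4 * δ)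
  have hc : 0 ≤ c := by positivity
  have hyoung := mul_sub_mul_sq_le_sq_div hδ a₂ (x ^ 2) y
  calc x * (x * (a₁ + a₂ * y - a₃ * x ^ 2)) + (1/2) * (x * (a₄ * x + a₅ * y)) ^ 2
      ≤ a₁ * x ^ 2 + (a₂ * x ^ 2 * y - δ * (x ^ 2) ^ 2)
          - (1/2) * a₅ ^ 2 * x ^ 4 + (1/2) * a₅ ^ 2 * y ^ 4 := by
        linarith [half_sq_mul_add_le a₄ a₅ x y]
    _ ≤ a₁ * x ^ 2 + c * y ^ 2 - (1/2) * a₅ ^ 2 * x ^ 4 + (1/2) * a₅ ^ 2 * y ^ 4 := by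
        gcongr
    _ ≤ max a₁ c * (1 + x ^ 2 + y ^ 2) - (1/2) * a₅ ^ 2 * x ^ 4 + (1/2) * a₅ ^ 2 * y ^ 4 := by
        have h₁ : a₁ * x ^ 2 ≤ max a₁ c * x ^ 2 := by gcongr; exact le_max_left _ _
        have h₂ : c * y ^ 2 ≤ max a₁ c * y ^ 2 := by gcongr; exact le_max_right _ _
        have h₀ : 0 ≤ max a₁ c := hc.trans (le_max_right _ _)
        linarith

theorem stmt_3 (a₁ a₂ a₃ a₄ a₅ : ℝ)
    (h₁ : 0 < a₁) (h₂ : 0 < a₂) (h₃ : 0 < a₃) (h₄ : 0 < a₄) (h₅ : 0 < a₅)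
    (hcond : a₄ ^ 2 + a₅ ^ 2 < a₃) :
    ∀ x y : ℝ,
      x * (x * (a₁ + a₂ * y - a₃ * x ^ 2)) + (1/2) * (x * (a₄ * x + a₅ * y)) ^ 2
        ≤ (max a₁ (a₂ ^ 2 / (4 * (a₃ - a₄ ^ 2 - a₅ ^ 2)))) * (1 + x ^ 2 + y ^ 2)
          - (1/2) * a₅ ^ 2 * x ^ 4 + (1/2) * a₅ ^ 2 * y ^ 4 :=
  stmt_3_general a₁ a₂ a₃ a₄ a₅ hcond
end

section
/- Let a₁, a₂, a₄, a₅ ∈ ℝ, a₃ > 0, and define f(x,y) = a₁ + a₂|y|^{4/3} − a₃x³ for x,y ∈ ℝ. Set a₆ = sup_{u≥0}(8u^{2/3} − 0.5a₃u²). Then for all x, x̄, y, ȳ ∈ ℝ: (x − x̄)(f(x,y) − f(x̄,ȳ)) ≤ max(a₆, a₂²)·(|x−x̄|² + |y−ȳ|²) − 0.5a₃|x−x̄|²(x² + x̄²) + 0.25a₃|y−ȳ|²(y² + ȳ²). -/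
/-!
The cubic drift is strongly monotone: `(x - x̄)(x³ - x̄³) = (x - x̄)²(x² + x x̄ + x̄²)` and
`x² + x x̄ + x̄² ≥ (x² + x̄²)/2`. The coupling term is handled through `t = |y|^{1/3}`: since
`|t⁴ - s⁴| ≤ 2 max(t, s) |t³ - s³|`, the difference `|y|^{4/3} - |ȳ|^{4/3}` is at most
`2 m^{1/3} |y - ȳ|` with `m = max(|y|, |ȳ|)`. Young's inequality then gives
`a₂²/2 |x - x̄|² + 2 m^{2/3} |y - ȳ|²`, and evaluating the supremum defining `a₆` at `u = m/2`
yields `2 m^{2/3} ≤ a₆ + a₃ m²/4`, which is absorbed by the compensator `a₃/4 |y - ȳ|²(y² + ȳ²)`.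
-/

theorem abs_pow_four_sub_le {t s : ℝ} (ht : 0 ≤ t) (hs : 0 ≤ s) :
    |t ^ 4 - s ^ 4| ≤ 2 * max t s * |t ^ 3 - s ^ 3| := by
  have hfactor : |t ^ 4 - s ^ 4| = (t + s) * (|t - s| * (t ^ 2 + s ^ 2)) := by
    rw [show t ^ 4 - s ^ 4 = (t + s) * ((t - s) * (t ^ 2 + s ^ 2)) by ring, abs_mul, abs_mul,
      abs_of_nonneg (by positivity : 0 ≤ t + s), abs_of_nonneg (by positivity : 0 ≤ t ^ 2 + s ^ 2)]
  have hcube : |t ^ 3 - s ^ 3| = |t - s| * (t ^ 2 + t * s + s ^ 2) := by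
    rw [show t ^ 3 - s ^ 3 = (t - s) * (t ^ 2 + t * s + s ^ 2) by ring, abs_mul,
      abs_of_nonneg (by positivity : 0 ≤ t ^ 2 + t * s + s ^ 2)]
  rw [hfactor, hcube]
  gcongr
  · linarith [le_max_left t s, le_max_right t s]
  · nlinarith [mul_nonneg ht hs]

theorem abs_rpow_four_thirds_sub_le {u v : ℝ} (hu : 0 ≤ u) (hv : 0 ≤ v) :
    |u ^ ((4:ℝ)/3) - v ^ ((4:ℝ)/3)| ≤ 2 * max u v ^ ((1:ℝ)/3) * |u - v| := by
  have hcube_root : ∀ w : ℝ, 0 ≤ w → ∀ n : ℕ, w ^ ((n:ℝ)/3) = (w ^ ((1:ℝ)/3)) ^ n := by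
    intro w hw n
    rw [← Real.rpow_mul_natCast hw]
    ring_nf
  have h := abs_pow_four_sub_le (Real.rpow_nonneg hu ((1:ℝ)/3)) (Real.rpow_nonneg hv ((1:ℝ)/3))
  rwa [← hcube_root u hu, ← hcube_root v hv, ← hcube_root u hu, ← hcube_root v hv,
    ← Real.rpow_max hu hv (by norm_num), Nat.cast_ofNat, Nat.cast_ofNat, div_self three_ne_zero,
    Real.rpow_one, Real.rpow_one] at h

theorem rpow_le_one_add {u p : ℝ} (hu : 0 ≤ u) (hp₀ : 0 ≤ p) (hp₁ : p ≤ 1) : u ^ p ≤ 1 + u := by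
  rcases le_total u 1 with h | h
  · linarith [Real.rpow_le_one hu h hp₀]
  · have := Real.rpow_le_rpow_of_exponent_le h hp₁
    rw [Real.rpow_one] at this
    linarith

theorem bddAbove_peak {a : ℝ} (ha : 0 < a) :
    BddAbove {v : ℝ | ∃ u : ℝ, 0 ≤ u ∧ v = 8 * u ^ ((2:ℝ)/3) - 0.5 * a * u ^ 2} := by
  refine ⟨8 + 32 / a, ?_⟩
  rintro v ⟨u, hu, rfl⟩
  have hquad : 8 * u - 0.5 * a * u ^ 2 ≤ 32 / a := by
    rw [le_div_iff₀ ha]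
    nlinarith [sq_nonneg (a * u - 8)]
  linarith [rpow_le_one_add hu (by norm_num : (0:ℝ) ≤ 2/3) (by norm_num : (2:ℝ)/3 ≤ 1)]

theorem two_mul_rpow_le_sSup_add {a m : ℝ} (ha : 0 < a) (hm : 0 ≤ m) :
    2 * m ^ ((2:ℝ)/3)
      ≤ sSup {v : ℝ | ∃ u : ℝ, 0 ≤ u ∧ v = 8 * u ^ ((2:ℝ)/3) - 0.5 * a * u ^ 2}
        + 0.25 * a * m ^ 2 := by
  have hmem := le_csSup (bddAbove_peak ha) ⟨m / 2, by positivity, rfl⟩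
  have hhalf : (1 / 2 : ℝ) ≤ (1 / 2) ^ ((2:ℝ)/3) := by
    simpa using Real.rpow_le_rpow_of_exponent_ge (by norm_num : (0:ℝ) < 1 / 2)
      (by norm_num : (1:ℝ) / 2 ≤ 1) (by norm_num : (2:ℝ)/3 ≤ 1)
  have hsplit : (m / 2) ^ ((2:ℝ)/3) = m ^ ((2:ℝ)/3) * (1 / 2) ^ ((2:ℝ)/3) := by
    rw [div_eq_mul_one_div, Real.mul_rpow hm (by norm_num)]
  rw [hsplit] at hmem
  nlinarith [Real.rpow_nonneg hm ((2:ℝ)/3), sq_nonneg m]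

theorem sq_sub_mul_sq_add_sq_le (x y : ℝ) :
    (x - y) ^ 2 * (x ^ 2 + y ^ 2) ≤ 2 * ((x - y) * (x ^ 3 - y ^ 3)) := by
  nlinarith [sq_nonneg ((x - y) * (x + y))]

theorem mul_mul_sub_rpow_four_thirds_le {a₂ a₃ a₆ : ℝ} (ha₃ : 0 ≤ a₃)
    (hpeak : ∀ m : ℝ, 0 ≤ m → 2 * m ^ ((2:ℝ)/3) ≤ a₆ + 0.25 * a₃ * m ^ 2) (p y yb : ℝ) :
    p * (a₂ * (|y| ^ ((4:ℝ)/3) - |yb| ^ ((4:ℝ)/3)))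
      ≤ a₂ ^ 2 / 2 * p ^ 2 + a₆ * (y - yb) ^ 2 + 0.25 * a₃ * (y - yb) ^ 2 * (y ^ 2 + yb ^ 2) := by
  set m := max |y| |yb|
  set r := m ^ ((1:ℝ)/3)
  have hm : 0 ≤ m := le_max_of_le_left (abs_nonneg y)
  have hr : r ^ 2 = m ^ ((2:ℝ)/3) := by
    rw [← Real.rpow_mul_natCast hm]
    norm_num
  have hm_sq : m ^ 2 ≤ y ^ 2 + yb ^ 2 := by
    rcases max_choice |y| |yb| with h | h <;> simp only [m, h, sq_abs] <;>
      nlinarith [sq_nonneg y, sq_nonneg yb]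
  have hdiff : |(|y| ^ ((4:ℝ)/3) - |yb| ^ ((4:ℝ)/3))| ≤ 2 * r * |y - yb| :=
    (abs_rpow_four_thirds_sub_le (abs_nonneg y) (abs_nonneg yb)).trans <|
      mul_le_mul_of_nonneg_left (abs_abs_sub_abs_le_abs_sub y yb) (by positivity)
  calc p * (a₂ * (|y| ^ ((4:ℝ)/3) - |yb| ^ ((4:ℝ)/3)))
      ≤ |a₂ * p| * (2 * r * |y - yb|) := by
        rw [mul_left_comm, ← mul_assoc]
        exact (le_abs_self _).trans (by rw [abs_mul]; gcongr)
    _ ≤ a₂ ^ 2 / 2 * p ^ 2 + 2 * r ^ 2 * (y - yb) ^ 2 := by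
        nlinarith [two_mul_le_add_sq |a₂ * p| (2 * r * |y - yb|), sq_abs (a₂ * p), sq_abs (y - yb)]
    _ ≤ a₂ ^ 2 / 2 * p ^ 2 + (a₆ + 0.25 * a₃ * m ^ 2) * (y - yb) ^ 2 := by
        rw [hr]
        gcongr
        exact hpeak m hm
    _ ≤ _ := by nlinarith [mul_le_mul_of_nonneg_left hm_sq (mul_nonneg ha₃ (sq_nonneg (y - yb)))]

theorem stmt_11 (a₁ a₂ a₃ a₆ : ℝ) (h₃ : 0 < a₃)
    (ha₆ : a₆ = sSup {v : ℝ | ∃ u : ℝ, 0 ≤ u ∧ v = 8 * u ^ ((2:ℝ)/3) - 0.5 * a₃ * u ^ 2}) :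
    ∀ x xb y yb : ℝ,
      (x - xb) * ((a₁ + a₂ * |y| ^ ((4:ℝ)/3) - a₃ * x ^ 3)
          - (a₁ + a₂ * |yb| ^ ((4:ℝ)/3) - a₃ * xb ^ 3))
        ≤ (max a₆ (a₂ ^ 2)) * (|x - xb| ^ 2 + |y - yb| ^ 2)
          - 0.5 * a₃ * |x - xb| ^ 2 * (x ^ 2 + xb ^ 2)
          + 0.25 * a₃ * |y - yb| ^ 2 * (y ^ 2 + yb ^ 2) := by
  intro x xb y yb
  have hpeak : ∀ m : ℝ, 0 ≤ m → 2 * m ^ ((2:ℝ)/3) ≤ a₆ + 0.25 * a₃ * m ^ 2 :=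
    fun m hm ↦ ha₆ ▸ two_mul_rpow_le_sSup_add h₃ hm
  have hcoupling := mul_mul_sub_rpow_four_thirds_le (a₂ := a₂) h₃.le hpeak (x - xb) y yb
  have hcubic := mul_le_mul_of_nonneg_left (sq_sub_mul_sq_add_sq_le x xb) h₃.le
  have hM₂ := mul_le_mul_of_nonneg_right (le_max_right a₆ (a₂ ^ 2)) (sq_nonneg (x - xb))
  have hM₆ := mul_le_mul_of_nonneg_right (le_max_left a₆ (a₂ ^ 2)) (sq_nonneg (y - yb))
  rw [sq_abs, sq_abs]
  nlinarith [mul_nonneg (sq_nonneg a₂) (sq_nonneg (x - xb))]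
end

section
/- Let a₄, a₅ ∈ ℝ, a₃ > 0, and define g(x,y) = a₄|x|^{3/2} + a₅y for x, y ∈ ℝ. Set a₇ = sup_{u≥0}(9a₄²u − 0.5a₃u²). Then 0 ≤ a₇ < ∞, and for all x, x̄, y, ȳ ∈ ℝ: 0.5·(g(x,y) − g(x̄,ȳ))² ≤ max(a₇, a₅²)·(|x−x̄|² + |y−ȳ|²) + 0.25·a₃·|x−x̄|²·(x² + x̄²). -/
/-! The sup `a₇` of the concave quadratic `9 a₄² u - a₃ u² / 2` over `u ≥ 0` is finite, and at least
its value `0` at `u = 0`. Substituting `|x| = s²`, `|x̄| = t²` turns the mean value estimate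
`(|x|^{3/2} - |x̄|^{3/2})² ≤ (9/4) |x - x̄|² (|x| + |x̄|)` into a polynomial inequality. With
`u = (|x| + |x̄|)/2` the coefficient `(9/4) a₄² (|x| + |x̄|) ≤ 9 a₄² u` is at most
`a₇ + a₃ u² / 2 ≤ a₇ + a₃ (x² + x̄²) / 4`; the `y`-part is handled by `(p + q)² ≤ 2p² + 2q²`. -/

lemma sq_pow_three_sub_pow_three_le {s t : ℝ} (hs : 0 ≤ s) (ht : 0 ≤ t) :
    (s ^ 3 - t ^ 3) ^ 2 ≤ 9 / 4 * (s ^ 2 - t ^ 2) ^ 2 * (s ^ 2 + t ^ 2) := by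
  have hfactor : (s ^ 2 + s * t + t ^ 2) ^ 2 ≤ 9 / 4 * (s + t) ^ 2 * (s ^ 2 + t ^ 2) := by
    nlinarith [mul_nonneg hs ht, sq_nonneg (s - t), mul_nonneg (mul_nonneg hs ht) (sq_nonneg (s - t))]
  calc (s ^ 3 - t ^ 3) ^ 2 = (s - t) ^ 2 * (s ^ 2 + s * t + t ^ 2) ^ 2 := by ring
    _ ≤ (s - t) ^ 2 * (9 / 4 * (s + t) ^ 2 * (s ^ 2 + t ^ 2)) := by gcongr
    _ = 9 / 4 * (s ^ 2 - t ^ 2) ^ 2 * (s ^ 2 + t ^ 2) := by ring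

lemma sq_rpow_three_halves_sub_le {a b : ℝ} (ha : 0 ≤ a) (hb : 0 ≤ b) :
    (a ^ ((3 : ℝ) / 2) - b ^ ((3 : ℝ) / 2)) ^ 2 ≤ 9 / 4 * (a - b) ^ 2 * (a + b) := by
  have rpow_eq {c : ℝ} (hc : 0 ≤ c) : c ^ ((3 : ℝ) / 2) = √c ^ 3 := by
    rw [Real.sqrt_eq_rpow, ← Real.rpow_natCast, ← Real.rpow_mul hc]
    norm_num
  have h := sq_pow_three_sub_pow_three_le (Real.sqrt_nonneg a) (Real.sqrt_nonneg b)
  rwa [Real.sq_sqrt ha, Real.sq_sqrt hb, ← rpow_eq ha, ← rpow_eq hb] at h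

lemma sq_abs_rpow_three_halves_sub_le (x y : ℝ) :
    (|x| ^ ((3 : ℝ) / 2) - |y| ^ ((3 : ℝ) / 2)) ^ 2 ≤ 9 / 4 * |x - y| ^ 2 * (|x| + |y|) := by
  have hdist : (|x| - |y|) ^ 2 ≤ |x - y| ^ 2 := by
    rw [← sq_abs (|x| - |y|)]
    exact pow_le_pow_left₀ (abs_nonneg _) (abs_abs_sub_abs_le_abs_sub x y) 2
  calc _ ≤ 9 / 4 * (|x| - |y|) ^ 2 * (|x| + |y|) :=
        sq_rpow_three_halves_sub_le (abs_nonneg x) (abs_nonneg y)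
    _ ≤ 9 / 4 * |x - y| ^ 2 * (|x| + |y|) := by gcongr

lemma bddAbove_quadratic_of_pos (b : ℝ) {c : ℝ} (hc : 0 < c) :
    BddAbove {v : ℝ | ∃ u : ℝ, 0 ≤ u ∧ v = b * u - c * u ^ 2} := by
  refine ⟨b ^ 2 / (4 * c), ?_⟩
  rintro v ⟨u, -, rfl⟩
  rw [le_div_iff₀ (by positivity)]
  nlinarith [sq_nonneg (2 * c * u - b)]

theorem stmt_12 (a₃ a₄ a₅ a₇ : ℝ) (h₃ : 0 < a₃)
    (ha₇ : a₇ = sSup {v : ℝ | ∃ u : ℝ, 0 ≤ u ∧ v = 9 * a₄ ^ 2 * u - 0.5 * a₃ * u ^ 2}) :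
    BddAbove {v : ℝ | ∃ u : ℝ, 0 ≤ u ∧ v = 9 * a₄ ^ 2 * u - 0.5 * a₃ * u ^ 2}
    ∧ 0 ≤ a₇
    ∧ ∀ x xb y yb : ℝ,
      0.5 * ((a₄ * |x| ^ ((3:ℝ)/2) + a₅ * y) - (a₄ * |xb| ^ ((3:ℝ)/2) + a₅ * yb)) ^ 2
        ≤ (max a₇ (a₅ ^ 2)) * (|x - xb| ^ 2 + |y - yb| ^ 2)
          + 0.25 * a₃ * |x - xb| ^ 2 * (x ^ 2 + xb ^ 2) := by
  have hbdd := bddAbove_quadratic_of_pos (9 * a₄ ^ 2) (c := 0.5 * a₃) (by positivity)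
  have le_a₇ (u : ℝ) (hu : 0 ≤ u) : 9 * a₄ ^ 2 * u - 0.5 * a₃ * u ^ 2 ≤ a₇ :=
    ha₇ ▸ le_csSup hbdd ⟨u, hu, rfl⟩
  have ha₇_nonneg : 0 ≤ a₇ := by simpa using le_a₇ 0 le_rfl
  refine ⟨hbdd, ha₇_nonneg, fun x xb y yb => ?_⟩
  have hcoef : 9 / 4 * a₄ ^ 2 * (|x| + |xb|) ≤ a₇ + 0.25 * a₃ * (x ^ 2 + xb ^ 2) := by
    have hu := le_a₇ ((|x| + |xb|) / 2) (by positivity)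
    nlinarith [sq_abs x, sq_abs xb, sq_nonneg (|x| - |xb|), mul_nonneg (sq_nonneg a₄)
      (add_nonneg (abs_nonneg x) (abs_nonneg xb))]
  have hpow := sq_abs_rpow_three_halves_sub_le x xb
  calc _ ≤ a₄ ^ 2 * (|x| ^ ((3:ℝ)/2) - |xb| ^ ((3:ℝ)/2)) ^ 2 + a₅ ^ 2 * |y - yb| ^ 2 := by
        rw [sq_abs]
        nlinarith [add_sq_le (a := a₄ * (|x| ^ ((3:ℝ)/2) - |xb| ^ ((3:ℝ)/2))) (b := a₅ * (y - yb))]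
    _ ≤ (a₇ + 0.25 * a₃ * (x ^ 2 + xb ^ 2)) * |x - xb| ^ 2 + max a₇ (a₅ ^ 2) * |y - yb| ^ 2 := by
        gcongr ?_ + ?_
        · nlinarith [mul_le_mul_of_nonneg_left hpow (sq_nonneg a₄),
            mul_le_mul_of_nonneg_right hcoef (sq_nonneg |x - xb|)]
        · exact mul_le_mul_of_nonneg_right (le_max_right _ _) (sq_nonneg _)
    _ ≤ _ := by
        nlinarith [mul_le_mul_of_nonneg_right (le_max_left a₇ (a₅ ^ 2)) (sq_nonneg |x - xb|)]
end
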